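/- Let A be a real m×n matrix, b ∈ ℝ^m, c ∈ ℝⁿ, μ ≥ 0, and suppose the polyhedron {z ∈ ℝⁿ : Az ≤ b} is bounded and contains some point z₀. Let r : ℝⁿ → ℝ be continuous with r(z) ≥ 0 for all z. Then there is a radius R > 0 such that for every λ ≥ 1, every global minimizer z(λ) of F_λ(z) = r(z) + λ·φ(Az − b) − μ·cᵀz satisfies ‖z(λ)‖ ≤ R; i.e. the minimizers are bounded uniformly in the penalty weight λ ≥ 1. -/

import Mathlib

/-! Since the polyhedron `{z | Az ≤ b}` is bounded and contains `z₀`, its recession cone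
`{d | Ad ≤ 0}` is `{0}`, so the 2-homogeneous function `z ↦ φ(Az)` is positive on the unit
sphere and, by compactness, `φ(Az) ≥ κ‖z‖²`; hence `φ(Az − b) ≥ κ‖z‖²/2 − φ(b)`. Comparing a
minimizer with `z₀`, where the penalty vanishes, bounds `φ(Az − b)` for `λ ≥ 1` by an affine
function of `‖z‖` that does not depend on `λ`, and a quadratic dominated by an affine function
is bounded. -/

open Finset Matrix Bornology

theorem le_one_add_div_of_mul_sq_le {a p q s : ℝ} (ha : 0 < a) (hp : 0 ≤ p) (hq : 0 ≤ q)
    (h : a * s ^ 2 ≤ p + q * s) : s ≤ 1 + (p + q) / a := by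
  rw [← sub_le_iff_le_add', le_div_iff₀ ha]
  by_contra! h'
  nlinarith

theorem eq_zero_of_forall_add_smul_mem {E : Type*} [NormedAddCommGroup E] [NormedSpace ℝ E]
    {S : Set E} (hS : IsBounded S) {x d : E} (h : ∀ t : ℝ, 0 ≤ t → x + t • d ∈ S) :
    d = 0 := by
  obtain ⟨C, hC⟩ := hS.exists_norm_le
  by_contra hd
  have hd' : 0 < ‖d‖ := norm_pos_iff.2 hd
  set t := (C + ‖x‖ + 1) / ‖d‖
  have ht : 0 ≤ t := by
    have := (norm_nonneg _).trans (hC _ (h 0 le_rfl))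
    positivity
  have htd : ‖t • d‖ = C + ‖x‖ + 1 := by
    rw [norm_smul, Real.norm_of_nonneg ht, div_mul_cancel₀ _ hd'.ne']
  have := norm_sub_le (x + t • d) x
  rw [add_sub_cancel_left] at this
  linarith [hC _ (h t ht)]

theorem exists_pos_mul_norm_sq_le {E : Type*} [NormedAddCommGroup E] [NormedSpace ℝ E]
    [ProperSpace E] {f : E → ℝ} (hf : Continuous f)
    (hsmul : ∀ (t : ℝ) (x : E), 0 ≤ t → f (t • x) = t ^ 2 * f x)
    (hpos : ∀ x, x ≠ 0 → 0 < f x) : ∃ κ > 0, ∀ x, κ * ‖x‖ ^ 2 ≤ f x := by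
  have hf0 : f 0 = 0 := by simpa using hsmul 0 0 le_rfl
  rcases subsingleton_or_nontrivial E with _ | _
  · exact ⟨1, one_pos, fun x => by simp [Subsingleton.elim x 0, hf0]⟩
  obtain ⟨d, hd, hmin⟩ := (isCompact_sphere (0 : E) 1).exists_isMinOn
    (NormedSpace.sphere_nonempty.2 zero_le_one) hf.continuousOn
  have hd1 : ‖d‖ = 1 := mem_sphere_zero_iff_norm.1 hd
  refine ⟨f d, hpos d (norm_ne_zero_iff.1 (by simp [hd1])), fun x => ?_⟩
  rcases eq_or_ne x 0 with rfl | hx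
  · simp [hf0]
  have hx' : ‖x‖ ≠ 0 := norm_ne_zero_iff.2 hx
  have hu : ‖x‖⁻¹ • x ∈ Metric.sphere (0 : E) 1 := by
    simp [norm_smul, hx']
  calc f d * ‖x‖ ^ 2 ≤ f (‖x‖⁻¹ • x) * ‖x‖ ^ 2 := by gcongr; exact hmin hu
    _ = f x := by rw [mul_comm, ← hsmul _ _ (norm_nonneg x), smul_inv_smul₀ hx']

def sqHinge {ι : Type*} [Fintype ι] (u : ι → ℝ) : ℝ := ∑ j, max 0 (u j) ^ 2

section sqHinge

variable {ι : Type*} [Fintype ι]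

theorem sqHinge_nonneg (u : ι → ℝ) : 0 ≤ sqHinge u :=
  sum_nonneg fun _ _ => sq_nonneg _

theorem sqHinge_eq_zero_iff {u : ι → ℝ} : sqHinge u = 0 ↔ ∀ j, u j ≤ 0 := by
  simp [sqHinge, sum_eq_zero_iff_of_nonneg fun _ _ => sq_nonneg _]

theorem sqHinge_smul {t : ℝ} (ht : 0 ≤ t) (u : ι → ℝ) :
    sqHinge (t • u) = t ^ 2 * sqHinge u := by
  rw [sqHinge, sqHinge, mul_sum]
  congr 1 with j
  rw [Pi.smul_apply, smul_eq_mul, ← mul_pow, mul_max_of_nonneg _ _ ht, mul_zero]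

theorem sqHinge_add_le (u v : ι → ℝ) : sqHinge (u + v) ≤ 2 * sqHinge u + 2 * sqHinge v := by
  simp only [sqHinge, Pi.add_apply, mul_sum, ← sum_add_distrib]
  refine sum_le_sum fun j _ => ?_
  have hsub : max 0 (u j + v j) ≤ max 0 (u j) + max 0 (v j) :=
    max_le (by positivity) (add_le_add (le_max_right _ _) (le_max_right _ _))
  nlinarith [le_max_left 0 (u j + v j), sq_nonneg (max 0 (u j) - max 0 (v j))]

theorem continuous_sqHinge : Continuous (sqHinge : (ι → ℝ) → ℝ) := by
  unfold sqHinge; fun_prop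

end sqHinge

theorem exists_pos_mul_norm_sq_le_sqHinge_mulVec {m n : Type*} [Fintype m] [Fintype n]
    {A : Matrix m n ℝ} {b : m → ℝ} {z₀ : EuclideanSpace ℝ n}
    (hbdd : IsBounded {z : EuclideanSpace ℝ n | ∀ j, (A *ᵥ z) j ≤ b j})
    (hz₀ : ∀ j, (A *ᵥ z₀) j ≤ b j) :
    ∃ κ > 0, ∀ z : EuclideanSpace ℝ n, κ * ‖z‖ ^ 2 ≤ sqHinge (A *ᵥ z) := by
  refine exists_pos_mul_norm_sq_le (E := EuclideanSpace ℝ n) (f := fun z => sqHinge (A *ᵥ z))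
    (continuous_sqHinge.comp (by fun_prop)) ?_ ?_
  · intro t z ht
    simp only [WithLp.ofLp_smul, mulVec_smul, sqHinge_smul ht]
  · intro d hd
    refine (sqHinge_nonneg _).lt_of_ne' fun h => hd ?_
    refine eq_zero_of_forall_add_smul_mem hbdd (x := z₀) fun t ht j => ?_
    have := mul_nonpos_of_nonneg_of_nonpos ht (sqHinge_eq_zero_iff.1 h j)
    simp only [WithLp.ofLp_add, WithLp.ofLp_smul, mulVec_add, mulVec_smul, Pi.add_apply,
      Pi.smul_apply, smul_eq_mul]
    linarith [hz₀ j]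

theorem abs_sum_mul_le_norm_mul_norm {n : Type*} [Fintype n] (c : n → ℝ)
    (z : EuclideanSpace ℝ n) :
    |∑ i, c i * z i| ≤ ‖WithLp.toLp 2 c‖ * ‖z‖ := by
  convert abs_real_inner_le_norm (WithLp.toLp 2 c) z using 2
  simp [PiLp.inner_apply, mul_comm]

theorem minimizers_uniformly_bounded_general (m n : ℕ) (A : Matrix (Fin m) (Fin n) ℝ)
    (b : Fin m → ℝ) (c : Fin n → ℝ) (mu : ℝ)
    (hbdd : Bornology.IsBounded
      {z : EuclideanSpace ℝ (Fin n) | ∀ j, A.mulVec z j ≤ b j})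
    (z₀ : EuclideanSpace ℝ (Fin n)) (hz₀ : ∀ j, A.mulVec z₀ j ≤ b j)
    (r : EuclideanSpace ℝ (Fin n) → ℝ)
    (hr0 : ∀ z, 0 ≤ r z) :
    ∃ R > (0 : ℝ), ∀ lam : ℝ, 1 ≤ lam →
      ∀ zmin : EuclideanSpace ℝ (Fin n),
        (∀ z : EuclideanSpace ℝ (Fin n),
          r zmin + lam * ∑ j, max 0 ((A.mulVec zmin - b) j) ^ 2 -
              mu * ∑ i, c i * zmin i ≤
            r z + lam * ∑ j, max 0 ((A.mulVec z - b) j) ^ 2 -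
              mu * ∑ i, c i * z i) →
        ‖zmin‖ ≤ R := by
  obtain ⟨κ, hκ, hgrowth⟩ := exists_pos_mul_norm_sq_le_sqHinge_mulVec hbdd hz₀
  set K := |mu| * ‖WithLp.toLp 2 c‖
  have hlin (z : EuclideanSpace ℝ (Fin n)) : |mu * ∑ i, c i * z i| ≤ K * ‖z‖ := by
    rw [abs_mul, mul_assoc]
    exact mul_le_mul_of_nonneg_left (abs_sum_mul_le_norm_mul_norm c z) (abs_nonneg mu)
  set p := r z₀ + K * ‖z₀‖ with hp_def
  have hK : 0 ≤ K := by positivity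
  have hp : 0 ≤ p := add_nonneg (hr0 z₀) (by positivity)
  have hb := sqHinge_nonneg b
  refine ⟨1 + (2 * sqHinge b + 2 * p + 2 * K) / κ,
    add_pos_of_pos_of_nonneg one_pos (div_nonneg (by linarith) hκ.le),
    fun lam hlam zmin hmin => ?_⟩
  have hfeas : sqHinge (A *ᵥ z₀ - b) = 0 :=
    sqHinge_eq_zero_iff.2 fun j => sub_nonpos.2 (hz₀ j)
  have hpen : sqHinge (A *ᵥ zmin - b) ≤ p + K * ‖zmin‖ := by
    have hcmp : r zmin + lam * sqHinge (A *ᵥ zmin - b) - mu * ∑ i, c i * zmin i ≤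
        r z₀ + lam * sqHinge (A *ᵥ z₀ - b) - mu * ∑ i, c i * z₀ i := hmin z₀
    rw [hfeas, mul_zero] at hcmp
    have hlam' : sqHinge (A *ᵥ zmin - b) ≤ lam * sqHinge (A *ᵥ zmin - b) :=
      le_mul_of_one_le_left (sqHinge_nonneg _) hlam
    linarith [hp_def, hr0 zmin, abs_le.1 (hlin zmin), abs_le.1 (hlin z₀)]
  have hquad : κ * ‖zmin‖ ^ 2 ≤ 2 * sqHinge (A *ᵥ zmin - b) + 2 * sqHinge b := by
    calc κ * ‖zmin‖ ^ 2 ≤ sqHinge (A *ᵥ zmin - b + b) := by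
          rw [sub_add_cancel]; exact hgrowth zmin
      _ ≤ _ := sqHinge_add_le _ _
  exact le_one_add_div_of_mul_sq_le hκ (by linarith) (by linarith) (by linarith)

/-- Uniform boundedness of minimizers in the penalty weight: if `{z : Az ≤ b}`
is bounded and contains a point `z₀`, `μ ≥ 0`, and `r` is continuous and
nonnegative, then there is `R > 0` such that for every `λ ≥ 1`, every global
minimizer of `F_λ(z) = r(z) + λ φ(Az − b) − μ cᵀz` has norm at most `R`. -/
theorem minimizers_uniformly_bounded (m n : ℕ) (A : Matrix (Fin m) (Fin n) ℝ)
    (b : Fin m → ℝ) (c : Fin n → ℝ) (mu : ℝ) (hmu : 0 ≤ mu)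
    (hbdd : Bornology.IsBounded
      {z : EuclideanSpace ℝ (Fin n) | ∀ j, A.mulVec z j ≤ b j})
    (z₀ : EuclideanSpace ℝ (Fin n)) (hz₀ : ∀ j, A.mulVec z₀ j ≤ b j)
    (r : EuclideanSpace ℝ (Fin n) → ℝ) (hr : Continuous r)
    (hr0 : ∀ z, 0 ≤ r z) :
    ∃ R > (0 : ℝ), ∀ lam : ℝ, 1 ≤ lam →
      ∀ zmin : EuclideanSpace ℝ (Fin n),
        (∀ z : EuclideanSpace ℝ (Fin n),
          r zmin + lam * ∑ j, max 0 ((A.mulVec zmin - b) j) ^ 2 -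
              mu * ∑ i, c i * zmin i ≤
            r z + lam * ∑ j, max 0 ((A.mulVec z - b) j) ^ 2 -
              mu * ∑ i, c i * z i) →
        ‖zmin‖ ≤ R :=
  minimizers_uniformly_bounded_general m n A b c mu hbdd z₀ hz₀ r hr0
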